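/- arXiv:1104.1997 — 5 statements merged into one kernel-verified Lean document; each statement's English description precedes it below -/
import Mathlib

section
/- Let t be an integer with t ≥ 3 and let c be a real number with 0 ≤ c ≤ c_t⁽⁰⁾ = (1/2)(1 - 2^{3/2}/((t+1)·sin(π/(t+1)))). Then the equation (t+1)·sin(π/(t+1))·(1 - c·x) = x^{3/2}·sin(π/x) has exactly one solution x with x ≥ 2. -/
/-!
Write `S = (t+1) sin(π/(t+1))` and `g x = x^{3/2} sin(π/x)`. With `u = π/x`,
`g' x = √x ((3/2) sin u - u cos u) > 0` because `u cos u < sin u` on `(0, π)`, so `g` is strictly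
increasing on `[1, ∞)` while `S (1 - c x)` is non-increasing: there is at most one solution.
The bound `c ≤ c_t⁽⁰⁾` says exactly `g 2 = 2^{3/2} ≤ S (1 - 2c)`, and forces `S ≥ 2`;
Jordan's inequality `sin(π/x) ≥ 2/x` gives `g (S²) ≥ 2S > S (1 - c S²)`, so a solution in
`[2, S²]` exists by the intermediate value theorem.
-/

open Real Set

namespace Real

theorem mul_cos_lt_sin {u : ℝ} (hu₀ : 0 < u) (huπ : u < π) : u * cos u < sin u := by
  have hsin : 0 < sin u := sin_pos_of_pos_of_lt_pi hu₀ huπ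
  rcases lt_or_ge u (π / 2) with hu | hu
  · have hcos : 0 < cos u := cos_pos_of_mem_Ioo ⟨by linarith, hu⟩
    have htan := lt_tan hu₀ hu
    rwa [tan_eq_sin_div_cos, lt_div_iff₀ hcos] at htan
  · have hcos : cos u ≤ 0 := cos_nonpos_of_pi_div_two_le_of_le hu (by linarith)
    nlinarith

theorem rpow_three_halves {x : ℝ} (hx : 0 ≤ x) : x ^ ((3 : ℝ) / 2) = x * √x := by
  rw [sqrt_eq_rpow, show (3 : ℝ) / 2 = 1 + 1 / 2 by norm_num, rpow_add' hx (by norm_num),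
    rpow_one]

theorem hasDerivAt_rpow_three_halves_mul_sin_pi_div {x : ℝ} (hx : 0 < x) :
    HasDerivAt (fun y : ℝ => y ^ ((3 : ℝ) / 2) * sin (π / y))
      (√x * (3 / 2 * sin (π / x) - π / x * cos (π / x))) x := by
  have hpow : HasDerivAt (fun y : ℝ => y ^ ((3 : ℝ) / 2)) (3 / 2 * √x) x := by
    convert hasDerivAt_rpow_const (p := 3 / 2) (Or.inl hx.ne') using 1
    rw [sqrt_eq_rpow]
    norm_num
  have hsin : HasDerivAt (fun y : ℝ => sin (π / y)) (cos (π / x) * -(π / x ^ 2)) x := by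
    have := (hasDerivAt_inv hx.ne').const_mul π
    simp only [← div_eq_mul_inv, mul_neg, ← div_eq_mul_inv] at this
    exact (hasDerivAt_sin _).comp x this
  refine (hpow.mul hsin).congr_deriv ?_
  rw [rpow_three_halves hx.le]
  field_simp
  ring

theorem strictMonoOn_rpow_three_halves_mul_sin_pi_div :
    StrictMonoOn (fun x : ℝ => x ^ ((3 : ℝ) / 2) * sin (π / x)) (Ici 1) := by
  have hderiv {x : ℝ} (hx : 0 < x) := hasDerivAt_rpow_three_halves_mul_sin_pi_div hx
  refine strictMonoOn_of_deriv_pos (convex_Ici 1)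
    (fun x hx => (hderiv (one_pos.trans_le hx)).continuousAt.continuousWithinAt) ?_
  intro x hx
  rw [interior_Ici] at hx
  have hx₀ : 0 < x := one_pos.trans hx
  have hu₀ : 0 < π / x := div_pos pi_pos hx₀
  have huπ : π / x < π := div_lt_self pi_pos hx
  rw [(hderiv hx₀).deriv]
  have hcos := mul_cos_lt_sin hu₀ huπ
  have hsin := sin_pos_of_pos_of_lt_pi hu₀ huπ
  exact mul_pos (sqrt_pos.2 hx₀) (by linarith)

theorem two_mul_sqrt_le_rpow_three_halves_mul_sin_pi_div {x : ℝ} (hx : 2 ≤ x) :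
    2 * √x ≤ x ^ ((3 : ℝ) / 2) * sin (π / x) := by
  have hx₀ : 0 < x := two_pos.trans_le hx
  have hjordan : 2 / x ≤ sin (π / x) := by
    have := mul_le_sin (div_pos pi_pos hx₀).le
      (div_le_div_of_nonneg_left pi_pos.le two_pos hx)
    rwa [div_mul_div_comm, mul_comm 2 π, mul_div_mul_left _ _ pi_pos.ne'] at this
  calc 2 * √x = x * √x * (2 / x) := by field_simp
    _ ≤ x ^ ((3 : ℝ) / 2) * sin (π / x) := by
      rw [rpow_three_halves hx₀.le]
      exact mul_le_mul_of_nonneg_left hjordan (by positivity)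

end Real

/-- For an integer `t ≥ 3` and `0 ≤ c ≤ c_t⁽⁰⁾`, the equation
`(t+1)·sin(π/(t+1))·(1 - cx) = x^{3/2}·sin(π/x)` has exactly one solution `x ≥ 2`. -/
theorem ft_existsUnique (t : ℤ) (ht : 3 ≤ t) (c : ℝ) (hc0 : 0 ≤ c)
    (hc1 : c ≤ (1 / 2) * (1 - 2 ^ ((3 : ℝ) / 2) /
      (((t : ℝ) + 1) * Real.sin (π / ((t : ℝ) + 1))))) :
    ∃! x : ℝ, 2 ≤ x ∧
      ((t : ℝ) + 1) * Real.sin (π / ((t : ℝ) + 1)) * (1 - c * x)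
        = x ^ ((3 : ℝ) / 2) * Real.sin (π / x) := by
  set S := ((t : ℝ) + 1) * sin (π / ((t : ℝ) + 1))
  set g : ℝ → ℝ := fun x => x ^ ((3 : ℝ) / 2) * sin (π / x)
  have ht₁ : (4 : ℝ) ≤ t + 1 := by
    have : (3 : ℝ) ≤ t := by exact_mod_cast ht
    linarith
  have hS₀ : 0 < S := mul_pos (by linarith) (sin_pos_of_pos_of_lt_pi (by positivity)
    (div_lt_self pi_pos (by linarith)))
  have hg₂ : g 2 = 2 ^ ((3 : ℝ) / 2) := by simp [g, sin_pi_div_two]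
  have hK : (2 : ℝ) ≤ 2 ^ ((3 : ℝ) / 2) := by
    simpa using rpow_le_rpow_of_exponent_le (x := 2) one_le_two (by norm_num : (1 : ℝ) ≤ 3 / 2)
  have hg₂_le : g 2 ≤ S * (1 - c * 2) := by
    rw [hg₂, ← div_le_iff₀' hS₀]
    linarith
  have hS₂ : 2 ≤ S := by nlinarith
  have hlt_g : S * (1 - c * S ^ 2) < g (S ^ 2) := by
    have hg_ge := two_mul_sqrt_le_rpow_three_halves_mul_sin_pi_div (x := S ^ 2) (by nlinarith)
    rw [sqrt_sq hS₀.le] at hg_ge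
    nlinarith [mul_nonneg hS₀.le (mul_nonneg hc0 (sq_nonneg S))]
  have hcont : ContinuousOn (fun x => S * (1 - c * x) - g x) (Icc 2 (S ^ 2)) :=
    (continuous_const.mul (continuous_const.sub (continuous_const_mul c))).continuousOn.sub
      fun x hx => (hasDerivAt_rpow_three_halves_mul_sin_pi_div
        (two_pos.trans_le hx.1)).continuousAt.continuousWithinAt
  have hanti : StrictAntiOn (fun x => S * (1 - c * x) - g x) (Ici 2) := fun a ha b hb hab => by
    have hg_lt := strictMonoOn_rpow_three_halves_mul_sin_pi_div (Ici_subset_Ici.2 one_le_two ha)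
      (Ici_subset_Ici.2 one_le_two hb) hab
    nlinarith [mul_nonneg hS₀.le hc0]
  obtain ⟨x, hx, hx_root⟩ := intermediate_value_Icc' (by nlinarith) hcont
    (show (0 : ℝ) ∈ Icc _ _ from ⟨by linarith, by linarith⟩)
  refine ⟨x, ⟨hx.1, sub_eq_zero.mp hx_root⟩, fun y ⟨hy, hy_root⟩ => ?_⟩
  exact hanti.injOn hy hx.1 ((sub_eq_zero.mpr hy_root).trans hx_root.symm)
end

section
/- Let t be an integer with t ≥ 4. The function f_t is decreasing on [0, c_t⁽⁰⁾]: if 0 ≤ c < c' ≤ c_t⁽⁰⁾ = (1/2)(1 - 2^{3/2}/((t+1)·sin(π/(t+1)))), and x ≥ 2 satisfies (t+1)·sin(π/(t+1))·(1 - c·x) = x^{3/2}·sin(π/x) while x' ≥ 2 satisfies (t+1)·sin(π/(t+1))·(1 - c'·x') = x'^{3/2}·sin(π/x'), then x' < x. -/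
/-!
By concavity of `sin` on `[0, π]`, `sin u / u` is strictly decreasing there, so
`x * sin (π / x) = π * (sin u / u)` with `u = π / x` is strictly increasing on `[1, ∞)`, and so is
`g x = x ^ (3/2) * sin (π / x)`. If `c < c'` and `x ≤ x'`, then `c * x < c' * x'`, so the left side
`S * (1 - c * x)` of the defining equation (with `S = (t+1) sin (π/(t+1)) > 0`) strictly decreases
from `x` to `x'` while the right side `g` does not.
-/

open Real Set

theorem strictAntiOn_sin_div_self : StrictAntiOn (fun u => sin u / u) (Ioc 0 π) := by
  intro a ha b hb hab
  simpa only [sin_zero, sub_zero] using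
    strictConcaveOn_sin_Icc.secant_strict_mono (a := 0) ⟨le_rfl, pi_pos.le⟩
      (Ioc_subset_Icc_self ha) (Ioc_subset_Icc_self hb) ha.1.ne' hb.1.ne' hab

theorem strictMonoOn_mul_sin_pi_div : StrictMonoOn (fun x => x * sin (π / x)) (Ici 1) := by
  intro x (hx : 1 ≤ x) y (hy : 1 ≤ y) hxy
  have hx0 : 0 < x := zero_lt_one.trans_le hx
  have hy0 : 0 < y := zero_lt_one.trans_le hy
  have hsinc : ∀ z, 0 < z → z * sin (π / z) = π * (sin (π / z) / (π / z)) := by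
    intro z hz
    field_simp
  have key : sin (π / x) / (π / x) < sin (π / y) / (π / y) :=
    strictAntiOn_sin_div_self ⟨div_pos pi_pos hy0, div_le_self pi_pos.le hy⟩
      ⟨div_pos pi_pos hx0, div_le_self pi_pos.le hx⟩ (div_lt_div_of_pos_left pi_pos hx0 hxy)
  simp only [hsinc x hx0, hsinc y hy0]
  exact mul_lt_mul_of_pos_left key pi_pos

theorem strictMonoOn_rpow_mul_sin_pi_div {p : ℝ} (hp : 1 ≤ p) :
    StrictMonoOn (fun x => x ^ p * sin (π / x)) (Ici 1) := by
  intro x (hx : 1 ≤ x) y (hy : 1 ≤ y) hxy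
  have hx0 : 0 < x := zero_lt_one.trans_le hx
  have hy0 : 0 < y := zero_lt_one.trans_le hy
  have hsplit : ∀ z, 0 < z → z ^ p * sin (π / z) = z ^ (p - 1) * (z * sin (π / z)) := by
    intro z hz
    rw [← mul_assoc, ← rpow_add_one hz.ne', sub_add_cancel]
  have hnonneg : 0 ≤ x * sin (π / x) :=
    mul_nonneg hx0.le (sin_nonneg_of_nonneg_of_le_pi (div_pos pi_pos hx0).le (div_le_self pi_pos.le hx))
  calc x ^ p * sin (π / x) = x ^ (p - 1) * (x * sin (π / x)) := hsplit x hx0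
    _ ≤ y ^ (p - 1) * (x * sin (π / x)) :=
      mul_le_mul_of_nonneg_right (rpow_le_rpow hx0.le hxy.le (by linarith)) hnonneg
    _ < y ^ (p - 1) * (y * sin (π / y)) :=
      mul_lt_mul_of_pos_left (strictMonoOn_mul_sin_pi_div hx hy hxy) (rpow_pos_of_pos hy0 _)
    _ = y ^ p * sin (π / y) := (hsplit y hy0).symm

theorem StrictMonoOn.lt_of_mul_one_sub_eq {g : ℝ → ℝ} {s : Set ℝ} (hg : StrictMonoOn g s)
    {S c c' x x' : ℝ} (hS : 0 < S) (hc : 0 ≤ c) (hcc' : c < c') (hx : x ∈ s) (hx0 : 0 < x)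
    (hx' : x' ∈ s) (hxeq : S * (1 - c * x) = g x) (hx'eq : S * (1 - c' * x') = g x') :
    x' < x := by
  by_contra! hle
  have hmul : c * x < c' * x' := calc
    c * x ≤ c * x' := mul_le_mul_of_nonneg_left hle hc
    _ < c' * x' := mul_lt_mul_of_pos_right hcc' (hx0.trans_le hle)
  have hlhs : S * (1 - c' * x') < S * (1 - c * x) := mul_lt_mul_of_pos_left (by linarith) hS
  linarith [hg.monotoneOn hx hx' hle]

theorem ft_decreasing_general (t : ℤ) (ht : 4 ≤ t) (c c' x x' : ℝ)
    (hc0 : 0 ≤ c) (hcc' : c < c')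
    (hx : 2 ≤ x)
    (hxeq : ((t : ℝ) + 1) * Real.sin (π / ((t : ℝ) + 1)) * (1 - c * x)
      = x ^ ((3 : ℝ) / 2) * Real.sin (π / x))
    (hx' : 2 ≤ x')
    (hx'eq : ((t : ℝ) + 1) * Real.sin (π / ((t : ℝ) + 1)) * (1 - c' * x')
      = x' ^ ((3 : ℝ) / 2) * Real.sin (π / x')) :
    x' < x := by
  have ht1 : (1 : ℝ) < t + 1 := by
    have : (4 : ℝ) ≤ t := by exact_mod_cast ht
    linarith
  -- `y * sin (π / y)` vanishes at `y = 1` and is strictly increasing on `[1, ∞)`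
  have hS : 0 < ((t : ℝ) + 1) * sin (π / ((t : ℝ) + 1)) := by
    simpa using strictMonoOn_mul_sin_pi_div self_mem_Ici ht1.le ht1
  exact (strictMonoOn_rpow_mul_sin_pi_div (by norm_num)).lt_of_mul_one_sub_eq hS hc0 hcc'
    (one_le_two.trans hx) (by linarith) (one_le_two.trans hx') hxeq hx'eq

/-- For an integer `t ≥ 4`, the function `f_t` is decreasing on `[0, c_t⁽⁰⁾]`
(solutions being characterized by `x ≥ 2` and
`(t+1)·sin(π/(t+1))·(1 - cx) = x^{3/2}·sin(π/x)`). -/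
theorem ft_decreasing (t : ℤ) (ht : 4 ≤ t) (c c' x x' : ℝ)
    (hc0 : 0 ≤ c) (hcc' : c < c')
    (hc'1 : c' ≤ (1 / 2) * (1 - 2 ^ ((3 : ℝ) / 2) /
      (((t : ℝ) + 1) * Real.sin (π / ((t : ℝ) + 1)))))
    (hx : 2 ≤ x)
    (hxeq : ((t : ℝ) + 1) * Real.sin (π / ((t : ℝ) + 1)) * (1 - c * x)
      = x ^ ((3 : ℝ) / 2) * Real.sin (π / x))
    (hx' : 2 ≤ x')
    (hx'eq : ((t : ℝ) + 1) * Real.sin (π / ((t : ℝ) + 1)) * (1 - c' * x')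
      = x' ^ ((3 : ℝ) / 2) * Real.sin (π / x')) :
    x' < x :=
  ft_decreasing_general t ht c c' x x' hc0 hcc' hx hxeq hx' hx'eq
end

section
/- Let p be a prime, let t be a residue class modulo p with t ≠ 0, let A be a nonempty subset of ℤ/pℤ, and set S = A + t·A. Then max over 1 ≤ r ≤ p-1 of |Σ_{a ∈ A} exp(2πi·a·r/p)| is at least |A|^{3/2}·(p - |S|)/(p·√|S|); equivalently, writing x = |S|/|A| and c = |A|/p, this maximum is at least ((1 - x·c)/√x)·|A|. -/
/-!
Write `B̂ r = expSum ψ B r` for a primitive character `ψ` of a finite ring `R`, and let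
`S = B + C`. Expanding and using orthogonality of `ψ` gives
`∑ r, B̂ r * Ĉ r * conj (Ŝ r) = |R| * |B| * |C|`, because every pair `(b, c)` lands in `S`.
The term `r = 0` is `|B| * |C| * |S|`, so the terms with `r ≠ 0` add up to
`|B| * |C| * (|R| - |S|)`. Bounding `|B̂ r|` there by its maximum and the rest by
Cauchy–Schwarz and Parseval yields
`|B| * |C| * (|R| - |S|) ≤ max_{r ≠ 0} |B̂ r| * |R| * √(|C| * |S|)`;
then take `B = A` and `C = t • A`, which has `|A|` elements since `t` is a unit.
-/

open Pointwise Real Finset ComplexConjugate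

namespace AddChar

variable {R : Type*} [CommRing R]

noncomputable def expSum (ψ : AddChar R ℂ) (B : Finset R) (r : R) : ℂ := ∑ b ∈ B, ψ (b * r)

variable {ψ : AddChar R ℂ}

@[simp] lemma expSum_zero (B : Finset R) : expSum ψ B 0 = #B := by simp [expSum]

@[simp] lemma expSum_singleton_zero (r : R) : expSum ψ {0} r = 1 := by simp [expSum]

variable [Fintype R] [DecidableEq R]

lemma sum_expSum_mul_expSum_mul_conj (hψ : ψ.IsPrimitive) (B C D : Finset R) :
    ∑ r, expSum ψ B r * expSum ψ C r * conj (expSum ψ D r) =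
      Fintype.card R * #{x ∈ B ×ˢ C | x.1 + x.2 ∈ D} := by
  have expand (r : R) : expSum ψ B r * expSum ψ C r * conj (expSum ψ D r) =
      ∑ x ∈ B ×ˢ C, ∑ d ∈ D, ψ (r * (x.1 + x.2 - d)) := by
    rw [expSum, expSum, sum_mul_sum, ← sum_product', expSum, map_sum, sum_mul_sum]
    refine sum_congr rfl fun x _ => sum_congr rfl fun d _ => ?_
    rw [← map_neg_eq_conj, ← map_add_eq_mul, ← map_add_eq_mul]
    ring_nf
  calc ∑ r, expSum ψ B r * expSum ψ C r * conj (expSum ψ D r)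
      = ∑ x ∈ B ×ˢ C, ∑ d ∈ D, ∑ r, ψ (r * (x.1 + x.2 - d)) := by
        simp_rw [expand]
        rw [sum_comm]
        exact sum_congr rfl fun _ _ => sum_comm
    _ = ∑ x ∈ B ×ˢ C, ∑ d ∈ D, if x.1 + x.2 = d then (Fintype.card R : ℂ) else 0 := by
        simp_rw [sum_mulShift _ hψ, sub_eq_zero, Nat.cast_ite, Nat.cast_zero]
    _ = Fintype.card R * #{x ∈ B ×ˢ C | x.1 + x.2 ∈ D} := by
        simp_rw [sum_ite_eq, natCast_card_filter, mul_sum, mul_boole]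

lemma sum_norm_expSum_sq (hψ : ψ.IsPrimitive) (B : Finset R) :
    ∑ r, ‖expSum ψ B r‖ ^ 2 = Fintype.card R * #B := by
  have h := sum_expSum_mul_expSum_mul_conj hψ B {0} B
  rw [filter_true_of_mem fun x hx => ?_, card_product, card_singleton, mul_one] at h
  · simp only [expSum_singleton_zero, mul_one, Complex.mul_conj'] at h
    exact_mod_cast h
  obtain ⟨hx₁, hx₂⟩ := mem_product.1 hx
  rwa [mem_singleton.1 hx₂, add_zero]

lemma sum_expSum_mul_expSum_mul_conj_add (hψ : ψ.IsPrimitive) (B C : Finset R) :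
    ∑ r, expSum ψ B r * expSum ψ C r * conj (expSum ψ (B + C) r) =
      Fintype.card R * (#B * #C) := by
  rw [sum_expSum_mul_expSum_mul_conj hψ, filter_true_of_mem fun x hx =>
    add_mem_add (mem_product.1 hx).1 (mem_product.1 hx).2, card_product]
  push_cast; ring

lemma norm_sum_erase_zero_expSum_mul_le [Nontrivial R] (hψ : ψ.IsPrimitive) (B C D : Finset R)
    {M : ℝ} (hM : ∀ r ≠ 0, ‖expSum ψ B r‖ ≤ M) :
    ‖∑ r ∈ univ.erase 0, expSum ψ B r * expSum ψ C r * conj (expSum ψ D r)‖ ≤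
      M * (Fintype.card R * √(#C * #D)) := by
  have hM₀ : 0 ≤ M := (norm_nonneg _).trans (hM 1 one_ne_zero)
  calc ‖∑ r ∈ univ.erase 0, expSum ψ B r * expSum ψ C r * conj (expSum ψ D r)‖
      ≤ ∑ r ∈ univ.erase 0, ‖expSum ψ B r‖ * (‖expSum ψ C r‖ * ‖expSum ψ D r‖) := by
        refine (norm_sum_le _ _).trans_eq (sum_congr rfl fun r _ => ?_)
        rw [norm_mul, norm_mul, Complex.norm_conj, mul_assoc]
    _ ≤ ∑ r ∈ univ.erase 0, M * (‖expSum ψ C r‖ * ‖expSum ψ D r‖) :=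
        sum_le_sum fun r hr => by gcongr; exact hM r (ne_of_mem_erase hr)
    _ ≤ M * ∑ r, ‖expSum ψ C r‖ * ‖expSum ψ D r‖ := by
        rw [← mul_sum]
        exact mul_le_mul_of_nonneg_left (sum_le_sum_of_subset_of_nonneg (erase_subset _ _)
          fun _ _ _ => by positivity) hM₀
    _ ≤ M * (√(Fintype.card R * #C) * √(Fintype.card R * #D)) := by
        gcongr
        have := Real.sum_mul_le_sqrt_mul_sqrt univ (fun r => ‖expSum ψ C r‖)
          fun r => ‖expSum ψ D r‖
        rwa [sum_norm_expSum_sq hψ, sum_norm_expSum_sq hψ] at this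
    _ = M * (Fintype.card R * √(#C * #D)) := by
        rw [← Real.sqrt_mul (by positivity), mul_mul_mul_comm, Real.sqrt_mul (by positivity),
          Real.sqrt_mul_self (by positivity)]

theorem exists_ne_zero_card_mul_card_mul_sub_card_add_le [Nontrivial R] (hψ : ψ.IsPrimitive)
    (B C : Finset R) :
    ∃ r ≠ 0, (#B * #C : ℝ) * (Fintype.card R - #(B + C)) ≤
      ‖expSum ψ B r‖ * (Fintype.card R * √(#C * #(B + C))) := by
  obtain ⟨r₀, hr₀, hmax⟩ := exists_max_image (univ.erase (0 : R)) (fun r => ‖expSum ψ B r‖)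
    ⟨1, mem_erase.2 ⟨one_ne_zero, mem_univ 1⟩⟩
  refine ⟨r₀, ne_of_mem_erase hr₀, ?_⟩
  have hsplit := add_sum_erase univ
    (fun r => expSum ψ B r * expSum ψ C r * conj (expSum ψ (B + C) r)) (mem_univ 0)
  simp only [sum_expSum_mul_expSum_mul_conj_add hψ, expSum_zero, map_natCast] at hsplit
  have hnonzero : ∑ r ∈ univ.erase 0, expSum ψ B r * expSum ψ C r * conj (expSum ψ (B + C) r) =
      ((#B * #C * (Fintype.card R - #(B + C)) : ℝ) : ℂ) := by
    push_cast
    linear_combination hsplit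
  calc (#B * #C : ℝ) * (Fintype.card R - #(B + C))
      ≤ ‖((#B * #C * (Fintype.card R - #(B + C)) : ℝ) : ℂ)‖ := by
        rw [Complex.norm_real]; exact Real.le_norm_self _
    _ ≤ _ := by
        rw [← hnonzero]
        exact norm_sum_erase_zero_expSum_mul_le hψ B C _ fun r hr =>
          hmax r (mem_erase.2 ⟨hr, mem_univ r⟩)

end AddChar

lemma ZMod.expSum_stdAddChar {p : ℕ} [NeZero p] (A : Finset (ZMod p)) (r : ZMod p) :
    AddChar.expSum stdAddChar A r =
      ∑ a ∈ A, Complex.exp (2 * π * Complex.I * a.val * r.val / p) := by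
  refine sum_congr rfl fun a _ => ?_
  have hval : a * r = ((a.val * r.val : ℕ) : ZMod p) := by simp
  rw [hval, stdAddChar_apply, toCircle_natCast]
  push_cast
  ring_nf

/-- The exponential sums lower bound for the Fourier bias of `A`: there is
`1 ≤ r ≤ p-1` with `|Â(r)| ≥ |A|^{3/2}·(p - |S|)/(p·√|S|)` where `S = A + t·A`. -/
theorem fourier_bias_lower_bound (p : ℕ) (hp : p.Prime) (t : ZMod p) (ht : t ≠ 0)
    (A : Finset (ZMod p)) (hA : A.Nonempty) :
    ∃ r : ℕ, 1 ≤ r ∧ r ≤ p - 1 ∧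
      (A.card : ℝ) ^ ((3 : ℝ) / 2) * ((p : ℝ) - ((A + t • A).card : ℝ)) /
          ((p : ℝ) * Real.sqrt ((A + t • A).card)) ≤
        ‖∑ a ∈ A, Complex.exp (2 * Real.pi * Complex.I * (a.val : ℂ) * r / p)‖ := by
  have := Fact.mk hp
  obtain ⟨r, hr, hbias⟩ := AddChar.exists_ne_zero_card_mul_card_mul_sub_card_add_le
    (ZMod.isPrimitive_stdAddChar p) A (t • A)
  rw [card_smul_finset₀ ht, ZMod.card, ZMod.expSum_stdAddChar] at hbias
  refine ⟨r.val, ZMod.val_pos.2 hr, Nat.le_sub_one_of_lt r.val_lt, ?_⟩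
  have ha : (0 : ℝ) < #A := by exact_mod_cast hA.card_pos
  have hs : (0 : ℝ) < #(A + t • A) := Nat.cast_pos.2 (hA.add (hA.smul_finset (a := t))).card_pos
  have hp₀ : (0 : ℝ) < p := by exact_mod_cast hp.pos
  have h32 : (#A : ℝ) ^ ((3 : ℝ) / 2) = #A * √(#A : ℝ) := by
    rw [show (3 : ℝ) / 2 = 1 + 1 / 2 by norm_num, Real.rpow_add ha, Real.rpow_one,
      Real.sqrt_eq_rpow]
  rw [Real.sqrt_mul ha.le] at hbias
  rw [div_le_iff₀ (by positivity), h32, ← mul_le_mul_iff_of_pos_left (Real.sqrt_pos.2 ha)]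
  calc √(#A : ℝ) * (#A * √(#A : ℝ) * (p - #(A + t • A))) = #A * #A * (p - #(A + t • A)) := by
        linear_combination (#A * (p - #(A + t • A)) : ℝ) * mul_self_sqrt ha.le
    _ ≤ _ := hbias
    _ = _ := by ring
end

section
/- Let η and β be real numbers with 0 ≤ η ≤ 1/√2 and 0 < β ≤ 1/3. If (1/β)·(η + 1 - 2·cos(πβ))/(2·(1 - cos(πβ))) ≥ 2, then β ≥ 1/4. -/
/-!
Suppose `β < 1/4`. Concavity of `cos` on `[0, π/4]` puts `c = cos (πβ)` above the chord,
`c ≥ 1 - 4βk` with `k = 1 - cos (π/4) = 1 - 1/√2 > 0`. The hypothesis says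
`4β(1 - c) ≤ η + 1 - 2c ≤ 2 - k - 2c`, and substituting the chord bound leaves
`k (4β - 1)² ≤ 0`, which is impossible.
-/

open Real

theorem Real.one_sub_mul_one_sub_cos_le_cos_mul {t a : ℝ} (ht₀ : 0 ≤ t) (ht₁ : t ≤ 1)
    (ha₀ : 0 ≤ a) (ha : a ≤ π / 2) : 1 - t * (1 - cos a) ≤ cos (t * a) := by
  have hmem : ∀ x, 0 ≤ x → x ≤ a → x ∈ Set.Icc (-(π / 2)) (π / 2) :=
    fun x hx₀ hxa => ⟨by linarith [pi_pos], hxa.trans ha⟩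
  have := strictConcaveOn_cos_Icc.concaveOn.2 (hmem 0 le_rfl ha₀) (hmem a ha₀ le_rfl)
    (sub_nonneg.2 ht₁) ht₀ (sub_add_cancel 1 t)
  simp only [smul_eq_mul, mul_zero, zero_add, cos_zero, mul_one] at this
  linarith

theorem Real.cos_pi_mul_lt_one {β : ℝ} (hβ₀ : 0 < β) (hβ₁ : β ≤ 1) : cos (π * β) < 1 := by
  have hπ := pi_pos
  simpa using cos_lt_cos_of_nonneg_of_le_pi le_rfl (by nlinarith) (by positivity)

theorem remark_first_bound_general (η β : ℝ) (hη1 : η ≤ 1 / Real.sqrt 2)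
    (hβ0 : 0 < β)
    (h : 2 ≤ (1 / β) * ((η + 1 - 2 * Real.cos (π * β)) / (2 * (1 - Real.cos (π * β))))) :
    1 / 4 ≤ β := by
  by_contra! hβ
  set c := cos (π * β)
  have hchord : 1 - 4 * β * (1 - √2 / 2) ≤ c := by
    have := one_sub_mul_one_sub_cos_le_cos_mul (t := 4 * β) (a := π / 4) (by positivity)
      (by linarith) (by positivity) (by linarith [pi_pos])
    rwa [cos_pi_div_four, show 4 * β * (π / 4) = π * β by ring] at this
  have hc : 0 < 1 - c := sub_pos.2 (cos_pi_mul_lt_one hβ0 (by linarith))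
  have hkey : 4 * β * (1 - c) ≤ η + 1 - 2 * c := by
    rw [one_div_mul_eq_div, div_div, le_div_iff₀ (by positivity)] at h
    linarith
  have hη : η ≤ √2 / 2 := by
    rwa [show (1 : ℝ) / √2 = √2 / 2 by field_simp; simp] at hη1
  have hk : 0 < 1 - √2 / 2 := by
    nlinarith [sq_sqrt (zero_le_two : (0 : ℝ) ≤ 2), sqrt_nonneg 2]
  nlinarith [mul_pos hk (pow_pos (sub_pos.2 hβ) 2)]

/-- First part of the Remark after Lev's lemma: if `0 ≤ η ≤ 1/√2`, `0 < β ≤ 1/3` and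
`(1/β)·(η + 1 - 2cos(πβ))/(2(1 - cos(πβ))) ≥ 2`, then `β ≥ 1/4`. -/
theorem remark_first_bound (η β : ℝ) (hη0 : 0 ≤ η) (hη1 : η ≤ 1 / Real.sqrt 2)
    (hβ0 : 0 < β) (hβ1 : β ≤ 1 / 3)
    (h : 2 ≤ (1 / β) * ((η + 1 - 2 * Real.cos (π * β)) / (2 * (1 - Real.cos (π * β))))) :
    1 / 4 ≤ β :=
  remark_first_bound_general η β hη1 hβ0 h
end

section
/- Let η and β be real numbers with 0 ≤ η ≤ 1/√2 and 0 < β ≤ 1/3, and let u ∈ (0, π] satisfy sin(u)/u = η·sin(πβ)/(πβ) (i.e. u = g⁻¹(η·g(πβ)) where g(u) = sin(u)/u). If π/u ≥ 2, then β ≤ 1/4. -/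
/-!
Suppose `β > 1/4`. Since `sin x / x` is strictly decreasing on `(0, π]` (concavity of `sin`),
`x = πβ ∈ (π/4, π]` gives `sin x / x < sin (π/4) / (π/4) = 2√2/π`, so as `η ≤ 1/√2` the
right-hand side of the defining equation is `< 2/π`. On the other hand `π/u ≥ 2` means
`u ≤ π/2`, where Jordan's inequality gives `sin u / u ≥ 2/π`.
-/

open Real

lemma Real.sin_div_lt_sin_div {x y : ℝ} (hx : 0 < x) (hxy : x < y) (hy : y ≤ π) :
    sin y / y < sin x / x := by
  have h := strictConcaveOn_sin_Icc.secant_strict_mono (a := 0) ⟨le_rfl, pi_pos.le⟩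
    ⟨hx.le, hxy.le.trans hy⟩ ⟨(hx.trans hxy).le, hy⟩ hx.ne' (hx.trans hxy).ne' hxy
  simpa only [sin_zero, sub_zero] using h

lemma Real.two_div_pi_le_sin_div {x : ℝ} (hx : 0 < x) (hx' : x ≤ π / 2) :
    2 / π ≤ sin x / x :=
  (le_div_iff₀ hx).2 (mul_le_sin hx.le hx')

lemma Real.sin_div_lt_two_mul_sqrt_two_div_pi {x : ℝ} (hx : π / 4 < x) (hx' : x ≤ π) :
    sin x / x < 2 * √2 / π := by
  calc sin x / x < sin (π / 4) / (π / 4) := sin_div_lt_sin_div (by positivity) hx hx'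
    _ = 2 * √2 / π := by rw [sin_pi_div_four]; field_simp; ring

theorem remark_second_bound_general (η β u : ℝ) (hη1 : η ≤ 1 / Real.sqrt 2)
    (hβ0 : 0 < β) (hβ1 : β ≤ 1 / 3) (hu0 : 0 < u)
    (hgu : Real.sin u / u = η * (Real.sin (π * β) / (π * β)))
    (h : 2 ≤ π / u) :
    β ≤ 1 / 4 := by
  by_contra! hβ
  have hx : π / 4 < π * β := by nlinarith [pi_pos]
  have hx' : π * β ≤ π := by nlinarith [pi_pos]
  have hgx_nonneg : 0 ≤ sin (π * β) / (π * β) :=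
    div_nonneg (sin_nonneg_of_nonneg_of_le_pi (by positivity) hx') (by positivity)
  have hgx := sin_div_lt_two_mul_sqrt_two_div_pi hx hx'
  have hgu_lower : 2 / π ≤ sin u / u :=
    two_div_pi_le_sin_div hu0 (by rw [le_div_iff₀ hu0] at h; linarith)
  have hrhs : η * (sin (π * β) / (π * β)) < 2 / π :=
    calc η * (sin (π * β) / (π * β)) ≤ 1 / √2 * (sin (π * β) / (π * β)) := by gcongr
      _ < 1 / √2 * (2 * √2 / π) := by gcongr
      _ = 2 / π := by field_simp
  linarith

/-- Second part of the Remark after Lev's lemma: if `0 ≤ η ≤ 1/√2`, `0 < β ≤ 1/3`,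
`u ∈ (0, π]` satisfies `sin(u)/u = η·sin(πβ)/(πβ)` (so `u = g⁻¹(η·g(πβ))`) and
`π/u ≥ 2`, then `β ≤ 1/4`. -/
theorem remark_second_bound (η β u : ℝ) (hη0 : 0 ≤ η) (hη1 : η ≤ 1 / Real.sqrt 2)
    (hβ0 : 0 < β) (hβ1 : β ≤ 1 / 3) (hu0 : 0 < u) (hu1 : u ≤ π)
    (hgu : Real.sin u / u = η * (Real.sin (π * β) / (π * β)))
    (h : 2 ≤ π / u) :
    β ≤ 1 / 4 :=
  remark_second_bound_general η β u hη1 hβ0 hβ1 hu0 hgu h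
end
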